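/- Let R be a semiprime ring with finitely many minimal primes and S ∈ Den(R, 𝔞) a left and right denominator set. Suppose that for all 𝔭 ∈ min(R, S), 𝔭 is a completely prime ideal of R and the left ideal S⁻¹𝔭 is a two-sided ideal of S⁻¹R. Then: (1) the ring S⁻¹R is a semiprime ring with min(S⁻¹R) = { S⁻¹𝔭 | 𝔭 ∈ min(R,S) }, and every ideal in min(S⁻¹R) is completely prime; (2) all ideals in the set { S⁻¹𝔭 | 𝔭 ∈ min(R,S) } are distinct, i.e. |min(S⁻¹R)| = |min(R,S)|. -/

import Mathlib

/- Common framework: two-sided ideals, prime ideals, denominator sets and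
   left localizations of (possibly noncommutative) rings, described
   axiomatically via their characteristic properties. -/

namespace BavulaMinPrimes

/-- A subset of a ring is a two-sided ideal. -/
def IsIdealSet {R : Type*} [Ring R] (I : Set R) : Prop :=
  (0 : R) ∈ I ∧ (∀ a ∈ I, ∀ b ∈ I, a + b ∈ I) ∧ (∀ a ∈ I, -a ∈ I) ∧
    ∀ a ∈ I, ∀ r : R, r * a ∈ I ∧ a * r ∈ I

/-- A (two-sided) prime ideal: a proper ideal `P` such that `A * B ⊆ P`
implies `A ⊆ P` or `B ⊆ P` for all ideals `A`, `B`. -/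
def IsPrimeIdealSet {R : Type*} [Ring R] (P : Set R) : Prop :=
  IsIdealSet P ∧ P ≠ Set.univ ∧
    ∀ A B : Set R, IsIdealSet A → IsIdealSet B →
      (∀ a ∈ A, ∀ b ∈ B, a * b ∈ P) → A ⊆ P ∨ B ⊆ P

/-- A completely prime ideal: the factor ring is a domain. -/
def IsCompletelyPrimeIdealSet {R : Type*} [Ring R] (P : Set R) : Prop :=
  IsIdealSet P ∧ P ≠ Set.univ ∧ ∀ a b : R, a * b ∈ P → a ∈ P ∨ b ∈ P

/-- A minimal prime ideal of a ring. -/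
def IsMinimalPrimeIdealSet {R : Type*} [Ring R] (P : Set R) : Prop :=
  IsPrimeIdealSet P ∧ ∀ P' : Set R, IsPrimeIdealSet P' → P' ⊆ P → P' = P

/-- A prime minimal over an ideal `A`. -/
def IsMinimalPrimeOver {R : Type*} [Ring R] (A P : Set R) : Prop :=
  IsPrimeIdealSet P ∧ A ⊆ P ∧
    ∀ P' : Set R, IsPrimeIdealSet P' → A ⊆ P' → P' ⊆ P → P' = P

/-- The set `min(R)` of minimal primes of `R`. -/
def minPrimes (R : Type*) [Ring R] : Set (Set R) := { P | IsMinimalPrimeIdealSet P }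

/-- The prime radical: intersection of all prime ideals. -/
def primeRadicalSet (R : Type*) [Ring R] : Set R :=
  { r : R | ∀ P : Set R, IsPrimeIdealSet P → r ∈ P }

/-- A ring is semiprime if its prime radical is zero. -/
def IsSemiprimeRing (R : Type*) [Ring R] : Prop := primeRadicalSet R = {0}

/-- A ring is prime if its zero ideal is a prime ideal. -/
def IsPrimeRing (R : Type*) [Ring R] : Prop := IsPrimeIdealSet ({0} : Set R)

/-- A multiplicative subset: `1 ∈ S`, `0 ∉ S`, closed under multiplication. -/
def IsMulSet {R : Type*} [Ring R] (S : Set R) : Prop :=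
  (1 : R) ∈ S ∧ (0 : R) ∉ S ∧ ∀ s ∈ S, ∀ t ∈ S, s * t ∈ S

/-- The left Ore condition: `S r ∩ R s ≠ ∅`. -/
def LeftOre {R : Type*} [Ring R] (S : Set R) : Prop :=
  ∀ r : R, ∀ s ∈ S, ∃ s' ∈ S, ∃ r' : R, s' * r = r' * s

/-- The right Ore condition: `r S ∩ s R ≠ ∅`. -/
def RightOre {R : Type*} [Ring R] (S : Set R) : Prop :=
  ∀ r : R, ∀ s ∈ S, ∃ s' ∈ S, ∃ r' : R, r * s' = s * r'

/-- A left denominator set: a left Ore multiplicative set such that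
`r s = 0` (with `s ∈ S`) implies `t r = 0` for some `t ∈ S`. -/
def IsLeftDenominatorSet {R : Type*} [Ring R] (S : Set R) : Prop :=
  IsMulSet S ∧ LeftOre S ∧ ∀ r : R, ∀ s ∈ S, r * s = 0 → ∃ t ∈ S, t * r = 0

/-- A right denominator set. -/
def IsRightDenominatorSet {R : Type*} [Ring R] (S : Set R) : Prop :=
  IsMulSet S ∧ RightOre S ∧ ∀ r : R, ∀ s ∈ S, s * r = 0 → ∃ t ∈ S, r * t = 0

/-- `ass_l(S) = { r | s r = 0 for some s ∈ S }`. -/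
def lAss {R : Type*} [Ring R] (S : Set R) : Set R := { r : R | ∃ s ∈ S, s * r = 0 }

/-- `f : R →+* Q` realizes `Q` as the left localization `S⁻¹R`:
elements of `S` become units, every element of `Q` is a left fraction
`(f s)⁻¹ (f r)`, and the kernel of `f` is `ass_l(S)`.  These properties
characterize `S⁻¹R` up to a unique `R`-isomorphism. -/
structure IsLeftLocalization {R Q : Type*} [Ring R] [Ring Q]
    (S : Set R) (f : R →+* Q) : Prop where
  isUnit : ∀ s ∈ S, IsUnit (f s)
  surj : ∀ q : Q, ∃ s ∈ S, ∃ r : R, f s * q = f r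
  ker : ∀ r : R, f r = 0 ↔ r ∈ lAss S

/-- `S⁻¹I = { s⁻¹ a | s ∈ S, a ∈ I }` as a subset of the localization `Q`:
`q ∈ S⁻¹I` iff `f s * q = f a` for some `s ∈ S`, `a ∈ I`. -/
def locSet {R Q : Type*} [Ring R] [Ring Q] (f : R →+* Q) (S : Set R)
    (I : Set R) : Set Q :=
  { q : Q | ∃ s ∈ S, ∃ a ∈ I, f s * q = f a }

/-- A normal element: `R n = n R`. -/
def IsNormalElement {R : Type*} [Ring R] (n : R) : Prop :=
  (∀ r : R, ∃ r' : R, r * n = n * r') ∧ ∀ r : R, ∃ r' : R, n * r = r' * n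

/-- A prime rich ring: every ideal contains a finite product of prime ideals
containing it (the empty product being the whole ring). -/
def IsPrimeRich (R : Type*) [Ring R] : Prop :=
  ∀ A : Set R, IsIdealSet A →
    ∃ (n : ℕ) (P : Fin n → Set R),
      (∀ i, IsPrimeIdealSet (P i) ∧ A ⊆ P i) ∧
      ∀ x : Fin n → R, (∀ i, x i ∈ P i) → (List.ofFn x).prod ∈ A

/-- An ideal which is finitely generated as a right `R`-module. -/
def IsFGRightIdeal {R : Type*} [Ring R] (I : Set R) : Prop :=
  ∃ (m : ℕ) (g : Fin m → R), (∀ i, g i ∈ I) ∧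
    ∀ x ∈ I, ∃ c : Fin m → R, x = ∑ i, g i * c i

/-!
Each `𝔭 ∈ min(R,S)` contains `ass(S)` and is recovered from `S⁻¹𝔭` by pulling back along
`R → S⁻¹R`, which makes `S⁻¹𝔭` completely prime and the assignment `𝔭 ↦ S⁻¹𝔭` injective.
Since `R` is semiprime with finitely many minimal primes, an element lying in every
`𝔭 ∈ min(R,S)`, multiplied on the right by an element of `S` lying in every minimal prime that
meets `S`, lies in the prime radical, hence is zero; so the element lies in `ass(S)`.
Consequently the finitely many ideals `S⁻¹𝔭` intersect to zero, every prime of `S⁻¹R` contains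
one of them, and they are exactly the minimal primes of `S⁻¹R`.
-/

section Ideals

variable {R : Type*} [Ring R]

namespace IsIdealSet

variable {I : Set R}

lemma zero_mem (h : IsIdealSet I) : (0 : R) ∈ I := h.1

lemma add_mem (h : IsIdealSet I) {a b : R} (ha : a ∈ I) (hb : b ∈ I) : a + b ∈ I :=
  h.2.1 a ha b hb

lemma mul_mem_left (h : IsIdealSet I) (r : R) {a : R} (ha : a ∈ I) : r * a ∈ I :=
  (h.2.2.2 a ha r).1

lemma mul_mem_right (h : IsIdealSet I) (r : R) {a : R} (ha : a ∈ I) : a * r ∈ I :=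
  (h.2.2.2 a ha r).2

end IsIdealSet

lemma isIdealSet_sInter {C : Set (Set R)} (h : ∀ I ∈ C, IsIdealSet I) : IsIdealSet (⋂₀ C) :=
  ⟨fun I hI => (h I hI).zero_mem,
    fun _ ha _ hb I hI => (h I hI).add_mem (ha I hI) (hb I hI),
    fun _ ha I hI => (h I hI).2.2.1 _ (ha I hI),
    fun _ ha r => ⟨fun I hI => (h I hI).mul_mem_left r (ha I hI),
      fun I hI => (h I hI).mul_mem_right r (ha I hI)⟩⟩

lemma IsCompletelyPrimeIdealSet.isPrimeIdealSet {P : Set R} (h : IsCompletelyPrimeIdealSet P) :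
    IsPrimeIdealSet P := by
  refine ⟨h.1, h.2.1, fun A B _ _ hAB => or_iff_not_imp_left.2 fun hA b hb => ?_⟩
  obtain ⟨a, ha, haP⟩ := Set.not_subset.1 hA
  exact (h.2.2 a b (hAB a ha b hb)).resolve_left haP

lemma isPrimeIdealSet_sInter_of_isChain {C : Set (Set R)} (hC : C.Nonempty)
    (hchain : IsChain (· ⊆ ·) C) (h : ∀ P ∈ C, IsPrimeIdealSet P) :
    IsPrimeIdealSet (⋂₀ C) := by
  obtain ⟨P₀, hP₀⟩ := hC
  refine ⟨isIdealSet_sInter fun P hP => (h P hP).1,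
    fun htop => (h P₀ hP₀).2.1 <| Set.univ_subset_iff.1 <| htop ▸ Set.sInter_subset_of_mem hP₀,
    fun A B hA hB hAB => ?_⟩
  by_contra! hAB'
  obtain ⟨⟨a, ha, haC⟩, ⟨b, hb, hbC⟩⟩ := And.imp Set.not_subset.1 Set.not_subset.1 hAB'
  simp only [Set.mem_sInter, not_forall] at haC hbC
  obtain ⟨Pa, hPa, haPa⟩ := haC
  obtain ⟨Pb, hPb, hbPb⟩ := hbC
  -- the smaller of `Pa` and `Pb` misses both `a` and `b`
  obtain ⟨K, hK, haK, hbK⟩ : ∃ K ∈ C, a ∉ K ∧ b ∉ K := by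
    rcases hchain.total hPa hPb with hle | hle
    · exact ⟨Pa, hPa, haPa, fun hbK => hbPb (hle hbK)⟩
    · exact ⟨Pb, hPb, fun haK => haPa (hle haK), hbPb⟩
  rcases (h K hK).2.2 A B hA hB fun x hx y hy => hAB x hx y hy K hK with hAK | hBK
  · exact haK (hAK ha)
  · exact hbK (hBK hb)

lemma exists_isMinimalPrimeIdealSet_subset {P : Set R} (hP : IsPrimeIdealSet P) :
    ∃ p : Set R, IsMinimalPrimeIdealSet p ∧ p ⊆ P := by
  obtain ⟨p, hpP, hmin⟩ := zorn_superset_nonempty {P : Set R | IsPrimeIdealSet P}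
    (fun C hC hchain hne => ⟨⋂₀ C, isPrimeIdealSet_sInter_of_isChain hne hchain hC,
      fun _ hI => Set.sInter_subset_of_mem hI⟩) P hP
  exact ⟨p, ⟨hmin.prop, fun P' hP' hsub => hsub.antisymm (hmin.2 hP' hsub)⟩, hpP⟩

lemma IsPrimeIdealSet.exists_subset_of_sInter_subset {P : Set R} (hP : IsPrimeIdealSet P)
    {T : Set (Set R)} (hT : T.Finite) (hid : ∀ I ∈ T, IsIdealSet I) (hsub : ⋂₀ T ⊆ P) :
    ∃ I ∈ T, I ⊆ P := by
  induction T, hT using Set.Finite.induction_on with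
  | empty => exact absurd (Set.univ_subset_iff.1 (by simpa using hsub)) hP.2.1
  | @insert I T _ _ ih =>
    have hI := hid I (Set.mem_insert I T)
    have hidT : ∀ J ∈ T, IsIdealSet J := fun J hJ => hid J (Set.mem_insert_of_mem I hJ)
    rw [Set.sInter_insert] at hsub
    rcases hP.2.2 I (⋂₀ T) hI (isIdealSet_sInter hidT) fun a ha b hb =>
        hsub ⟨hI.mul_mem_right b ha, fun J hJ => (hidT J hJ).mul_mem_left a (hb J hJ)⟩ with
      hIP | hTP
    · exact ⟨I, Set.mem_insert I T, hIP⟩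
    · obtain ⟨J, hJ, hJP⟩ := ih hidT hTP
      exact ⟨J, Set.mem_insert_of_mem I hJ, hJP⟩

lemma IsMulSet.exists_mem_sInter {S : Set R} (hS : IsMulSet S) {T : Set (Set R)}
    (hT : T.Finite) (h : ∀ I ∈ T, IsIdealSet I ∧ (I ∩ S).Nonempty) :
    ∃ s ∈ S, ∀ I ∈ T, s ∈ I := by
  induction T, hT using Set.Finite.induction_on with
  | empty => exact ⟨1, hS.1, fun _ hI => absurd hI (Set.notMem_empty _)⟩
  | @insert I T _ _ ih =>
    obtain ⟨s, hs, hsT⟩ := ih fun J hJ => h J (Set.mem_insert_of_mem I hJ)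
    obtain ⟨hI, u, huI, huS⟩ := h I (Set.mem_insert I T)
    refine ⟨u * s, hS.2.2 u huS s hs, fun J hJ => ?_⟩
    rcases Set.mem_insert_iff.1 hJ with rfl | hJT
    · exact hI.mul_mem_right s huI
    · exact (h J (Set.mem_insert_of_mem I hJT)).1.mul_mem_left u (hsT J hJT)

end Ideals

section Localization

variable {R Q : Type*} [Ring R] [Ring Q] {S : Set R}

/-- `min(R,S)`. -/
def minPrimesDisjoint (S : Set R) : Set (Set R) :=
  {p | IsMinimalPrimeIdealSet p ∧ p ∩ S = ∅}

lemma mem_lAss_of_forall_mem_minPrimesDisjoint (hR : IsSemiprimeRing R)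
    (hfin : (minPrimes R).Finite) (hS : IsLeftDenominatorSet S) {b : R}
    (hb : ∀ p ∈ minPrimesDisjoint S, b ∈ p) : b ∈ lAss S := by
  obtain ⟨s, hs, hsp⟩ := hS.1.exists_mem_sInter (T := {p ∈ minPrimes R | (p ∩ S).Nonempty})
    (hfin.subset (Set.sep_subset _ _)) fun p hp => ⟨hp.1.1.1, hp.2⟩
  have hbs : b * s ∈ primeRadicalSet R := fun P hP => by
    obtain ⟨p, hp, hpP⟩ := exists_isMinimalPrimeIdealSet_subset hP
    apply hpP
    rcases (p ∩ S).eq_empty_or_nonempty with hdisj | hmeet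
    · exact hp.1.1.mul_mem_right s (hb p ⟨hp, hdisj⟩)
    · exact hp.1.1.mul_mem_left b (hsp p ⟨hp, hmeet⟩)
  rw [hR] at hbs
  exact hS.2.2 b s hs hbs

namespace IsCompletelyPrimeIdealSet

variable {p : Set R}

lemma mem_of_mul_mem (hp : IsCompletelyPrimeIdealSet p) (hdisj : p ∩ S = ∅) {s r : R}
    (hs : s ∈ S) (hsr : s * r ∈ p) : r ∈ p :=
  (hp.2.2 s r hsr).resolve_left fun hsp => Set.eq_empty_iff_forall_notMem.1 hdisj s ⟨hsp, hs⟩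

lemma lAss_subset (hp : IsCompletelyPrimeIdealSet p) (hdisj : p ∩ S = ∅) : lAss S ⊆ p :=
  fun _ ⟨_, hs, h0⟩ => hp.mem_of_mul_mem hdisj hs (h0 ▸ hp.1.zero_mem)

lemma map_mem_locSet_iff (f : R →+* Q) (hf : IsLeftLocalization S f) (hS : IsMulSet S)
    (hp : IsCompletelyPrimeIdealSet p) (hdisj : p ∩ S = ∅) (r : R) :
    f r ∈ locSet f S p ↔ r ∈ p := by
  refine ⟨fun ⟨s, hs, a, ha, hsa⟩ => hp.mem_of_mul_mem hdisj hs ?_,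
    fun hr => ⟨1, hS.1, r, hr, by rw [map_one, one_mul]⟩⟩
  have hker : s * r - a ∈ lAss S := (hf.ker _).1 (by rw [map_sub, map_mul, hsa, sub_self])
  simpa using hp.1.add_mem (hp.lAss_subset hdisj hker) ha

lemma mem_locSet_iff_of_mul_eq (f : R →+* Q) (hf : IsLeftLocalization S f) (hS : IsMulSet S)
    (hp : IsCompletelyPrimeIdealSet p) (hdisj : p ∩ S = ∅) (hideal : IsIdealSet (locSet f S p))
    {q : Q} {s r : R} (hs : s ∈ S) (hq : f s * q = f r) :
    q ∈ locSet f S p ↔ r ∈ p := by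
  refine ⟨fun h => ?_, fun hr => ⟨s, hs, r, hr, hq⟩⟩
  rw [← hp.map_mem_locSet_iff f hf hS hdisj, ← hq]
  exact hideal.mul_mem_left (f s) h

end IsCompletelyPrimeIdealSet

lemma isCompletelyPrimeIdealSet_locSet (f : R →+* Q) (hf : IsLeftLocalization S f)
    (hS : IsLeftDenominatorSet S) {p : Set R} (hp : IsCompletelyPrimeIdealSet p)
    (hdisj : p ∩ S = ∅) (hideal : IsIdealSet (locSet f S p)) :
    IsCompletelyPrimeIdealSet (locSet f S p) := by
  have hmem : ∀ {q : Q} {s r : R}, s ∈ S → f s * q = f r → (q ∈ locSet f S p ↔ r ∈ p) :=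
    hp.mem_locSet_iff_of_mul_eq f hf hS.1 hdisj hideal
  refine ⟨hideal, fun htop => ?_, fun q₁ q₂ hq => ?_⟩
  · have h1 : (1 : R) ∈ p := (hmem hS.1.1 (by rw [map_one, one_mul])).1 (htop ▸ Set.mem_univ 1)
    exact Set.eq_empty_iff_forall_notMem.1 hdisj 1 ⟨h1, hS.1.1⟩
  obtain ⟨s₁, hs₁, r₁, hr₁⟩ := hf.surj q₁
  obtain ⟨s₂, hs₂, r₂, hr₂⟩ := hf.surj q₂
  obtain ⟨s₃, hs₃, r₃, hore⟩ := hS.2.1 r₁ s₂ hs₂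
  have hprod : f (s₃ * s₁) * (q₁ * q₂) = f (r₃ * r₂) := by
    calc f (s₃ * s₁) * (q₁ * q₂) = f s₃ * (f s₁ * q₁) * q₂ := by
          simp only [map_mul, mul_assoc]
      _ = f r₃ * (f s₂ * q₂) := by rw [hr₁, ← map_mul, hore, map_mul, mul_assoc]
      _ = f (r₃ * r₂) := by rw [hr₂, map_mul]
  rcases hp.2.2 r₃ r₂ ((hmem (hS.1.2.2 s₃ hs₃ s₁ hs₁) hprod).1 hq) with h₃ | h₂
  · refine Or.inl ((hmem hs₁ hr₁).2 (hp.mem_of_mul_mem hdisj hs₃ ?_))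
    rw [hore]
    exact hp.1.mul_mem_right s₂ h₃
  · exact Or.inr ((hmem hs₂ hr₂).2 h₂)

variable (f : R →+* Q)

lemma eq_zero_of_forall_mem_locSet (hR : IsSemiprimeRing R) (hfin : (minPrimes R).Finite)
    (hS : IsLeftDenominatorSet S) (hf : IsLeftLocalization S f)
    (hcp : ∀ p ∈ minPrimesDisjoint S,
      IsCompletelyPrimeIdealSet p ∧ IsIdealSet (locSet f S p))
    {q : Q} (hq : ∀ p ∈ minPrimesDisjoint S, q ∈ locSet f S p) : q = 0 := by
  obtain ⟨s, hs, r, hsr⟩ := hf.surj q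
  have hr : r ∈ lAss S := mem_lAss_of_forall_mem_minPrimesDisjoint hR hfin hS fun p hp =>
    ((hcp p hp).1.mem_locSet_iff_of_mul_eq f hf hS.1 hp.2 (hcp p hp).2 hs hsr).1 (hq p hp)
  rw [(hf.ker r).2 hr] at hsr
  exact (hf.isUnit s hs).mul_right_eq_zero.1 hsr

lemma exists_locSet_subset_of_isPrimeIdealSet (hR : IsSemiprimeRing R)
    (hfin : (minPrimes R).Finite) (hS : IsLeftDenominatorSet S) (hf : IsLeftLocalization S f)
    (hcp : ∀ p ∈ minPrimesDisjoint S,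
      IsCompletelyPrimeIdealSet p ∧ IsIdealSet (locSet f S p))
    {P : Set Q} (hP : IsPrimeIdealSet P) : ∃ p ∈ minPrimesDisjoint S, locSet f S p ⊆ P := by
  obtain ⟨_, ⟨p, hp, rfl⟩, hpP⟩ := hP.exists_subset_of_sInter_subset
    ((hfin.subset fun _ hp => (hp : _ ∈ minPrimesDisjoint S).1).image (locSet f S))
    (by rintro _ ⟨p, hp, rfl⟩; exact (hcp p hp).2)
    fun q hq => by
      rw [eq_zero_of_forall_mem_locSet f hR hfin hS hf hcp fun p hp => hq _ ⟨p, hp, rfl⟩]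
      exact hP.1.zero_mem
  exact ⟨p, hp, hpP⟩

lemma minPrimes_eq_image_locSet (hR : IsSemiprimeRing R) (hfin : (minPrimes R).Finite)
    (hS : IsLeftDenominatorSet S) (hf : IsLeftLocalization S f)
    (hcp : ∀ p ∈ minPrimesDisjoint S,
      IsCompletelyPrimeIdealSet p ∧ IsIdealSet (locSet f S p)) :
    minPrimes Q = locSet f S '' minPrimesDisjoint S := by
  have hprime : ∀ p ∈ minPrimesDisjoint S, IsPrimeIdealSet (locSet f S p) := fun p hp =>
    (isCompletelyPrimeIdealSet_locSet f hf hS (hcp p hp).1 hp.2 (hcp p hp).2).isPrimeIdealSet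
  have hcontains := fun {P : Set Q} (hP : IsPrimeIdealSet P) =>
    exists_locSet_subset_of_isPrimeIdealSet f hR hfin hS hf hcp hP
  ext P
  constructor
  · intro hP
    obtain ⟨p, hp, hpP⟩ := hcontains hP.1
    exact ⟨p, hp, hP.2 _ (hprime p hp) hpP⟩
  · rintro ⟨p, hp, rfl⟩
    refine ⟨hprime p hp, fun P hP hPp => ?_⟩
    obtain ⟨p', hp', hp'P⟩ := hcontains hP
    have hpre := fun {p : Set R} (hp : p ∈ minPrimesDisjoint S) =>
      (hcp p hp).1.map_mem_locSet_iff f hf hS.1 hp.2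
    obtain rfl : p' = p := hp.1.2 p' hp'.1.1 fun r hr =>
      (hpre hp r).1 (hPp (hp'P ((hpre hp' r).2 hr)))
    exact hPp.antisymm hp'P

end Localization

theorem statement6_general {R Q : Type*} [Ring R] [Ring Q]
    (hR : IsSemiprimeRing R) (hfin : (minPrimes R).Finite)
    {S : Set R} (hSl : IsLeftDenominatorSet S)
    (f : R →+* Q) (hf : IsLeftLocalization S f)
    (hcp : ∀ p ∈ {p : Set R | IsMinimalPrimeIdealSet p ∧ p ∩ S = ∅},
      IsCompletelyPrimeIdealSet p ∧ IsIdealSet (locSet f S p)) :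
    IsSemiprimeRing Q ∧
    minPrimes Q = locSet f S '' {p : Set R | IsMinimalPrimeIdealSet p ∧ p ∩ S = ∅} ∧
    (∀ P ∈ minPrimes Q, IsCompletelyPrimeIdealSet P) ∧
    Set.InjOn (locSet f S) {p : Set R | IsMinimalPrimeIdealSet p ∧ p ∩ S = ∅} ∧
    (minPrimes Q).ncard = {p : Set R | IsMinimalPrimeIdealSet p ∧ p ∩ S = ∅}.ncard := by
  have himg := minPrimes_eq_image_locSet f hR hfin hSl hf hcp
  have hlocCP : ∀ p ∈ minPrimesDisjoint S, IsCompletelyPrimeIdealSet (locSet f S p) :=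
    fun p hp => isCompletelyPrimeIdealSet_locSet f hf hSl (hcp p hp).1 hp.2 (hcp p hp).2
  have hinj : Set.InjOn (locSet f S) (minPrimesDisjoint S) := fun p hp p' hp' h =>
    Set.ext fun r => by
      rw [← (hcp p hp).1.map_mem_locSet_iff f hf hSl.1 hp.2,
        ← (hcp p' hp').1.map_mem_locSet_iff f hf hSl.1 hp'.2, h]
  refine ⟨?_, himg, ?_, hinj, by rw [himg, hinj.ncard_image]; rfl⟩
  · refine Set.ext fun q =>
      ⟨fun hq => ?_, fun hq P hP => Set.mem_singleton_iff.1 hq ▸ hP.1.zero_mem⟩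
    exact eq_zero_of_forall_mem_locSet f hR hfin hSl hf hcp fun p hp =>
      hq _ (hlocCP p hp).isPrimeIdealSet
  · rw [himg]
    rintro _ ⟨p, hp, rfl⟩
    exact hlocCP p hp

/-- Let `R` be semiprime with finitely many minimal primes and
`S ∈ Den(R, 𝔞)`.  If every `𝔭 ∈ min(R,S)` is completely prime and `S⁻¹𝔭` is
a two-sided ideal of `S⁻¹R`, then `S⁻¹R` is semiprime with
`min(S⁻¹R) = { S⁻¹𝔭 | 𝔭 ∈ min(R,S) }`, every minimal prime of `S⁻¹R` is
completely prime, and all the ideals `S⁻¹𝔭` are distinct, i.e.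
`|min(S⁻¹R)| = |min(R,S)|`. -/
theorem statement6 {R Q : Type*} [Ring R] [Ring Q]
    (hR : IsSemiprimeRing R) (hfin : (minPrimes R).Finite)
    {S : Set R} (hSl : IsLeftDenominatorSet S) (hSr : IsRightDenominatorSet S)
    {A : Set R} (hass : lAss S = A)
    (f : R →+* Q) (hf : IsLeftLocalization S f)
    (hcp : ∀ p ∈ {p : Set R | IsMinimalPrimeIdealSet p ∧ p ∩ S = ∅},
      IsCompletelyPrimeIdealSet p ∧ IsIdealSet (locSet f S p)) :
    IsSemiprimeRing Q ∧
    minPrimes Q = locSet f S '' {p : Set R | IsMinimalPrimeIdealSet p ∧ p ∩ S = ∅} ∧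
    (∀ P ∈ minPrimes Q, IsCompletelyPrimeIdealSet P) ∧
    Set.InjOn (locSet f S) {p : Set R | IsMinimalPrimeIdealSet p ∧ p ∩ S = ∅} ∧
    (minPrimes Q).ncard = {p : Set R | IsMinimalPrimeIdealSet p ∧ p ∩ S = ∅}.ncard :=
  statement6_general hR hfin hSl f hf hcp

end BavulaMinPrimes
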